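/- Let γ ∈ (0,1), ε ∈ (0, 2(1-γ)/(4+5γ-6γ²)), and X ∈ [0, (1-γ)/3]. Define α = 1-ε and β = 1-ε², and consider the cubic f(x) = (x-α)[(x-(α+(1-α)γ))(x-β) - X(1-α)(1-β)] - γ X (1-α)(1-β)(x+1-2β). Then f(1 - ε²/2) > 0. -/

import Mathlib

/-!
At `x = 1 - ε²/2` the cubic factors as `ε⁴ * q`, where `q` is a quadratic in `ε` that is affine
and decreasing in `X`. At the extreme value `X = (1 - γ)/3` the linear coefficient of `q` becomes
`-(4 + 5γ - 6γ²)/12`, so the bound on `ε` is exactly what makes `q` positive there.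
-/

def charpoly (γ X α β x : ℝ) : ℝ :=
  (x - α) * ((x - (α + (1 - α) * γ)) * (x - β) - X * (1 - α) * (1 - β))
    - γ * X * (1 - α) * (1 - β) * (x + 1 - 2 * β)

theorem charpoly_eval_one_sub_sq_half (γ ε X : ℝ) :
    charpoly γ X (1 - ε) (1 - ε ^ 2) (1 - ε ^ 2 / 2) =
      ε ^ 4 * ((1 - γ) / 2 - X - ε * ((2 - γ) / 4 + (3 * γ - 1) / 2 * X) + ε ^ 2 / 8) := by
  unfold charpoly
  ring

theorem quadratic_factor_pos {γ ε X : ℝ} (hcoef : 0 ≤ 2 + ε * (3 * γ - 1))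
    (hε : ε * (4 + 5 * γ - 6 * γ ^ 2) < 2 * (1 - γ)) (hX : X ≤ (1 - γ) / 3) :
    0 < (1 - γ) / 2 - X - ε * ((2 - γ) / 4 + (3 * γ - 1) / 2 * X) + ε ^ 2 / 8 := by
  have hdecomp : (1 - γ) / 2 - X - ε * ((2 - γ) / 4 + (3 * γ - 1) / 2 * X) + ε ^ 2 / 8 =
      ((1 - γ) / 3 - X) * (2 + ε * (3 * γ - 1)) / 2
        + (2 * (1 - γ) - ε * (4 + 5 * γ - 6 * γ ^ 2)) / 12 + ε ^ 2 / 8 := by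
    ring
  rw [hdecomp]
  have := mul_nonneg (sub_nonneg.2 hX) hcoef
  positivity

theorem one_sub_lt_four_add_five_mul_sub_six_mul_sq {γ : ℝ} (h0 : 0 ≤ γ) (h1 : γ ≤ 1) :
    1 - γ < 4 + 5 * γ - 6 * γ ^ 2 := by
  nlinarith [mul_nonneg h0 (sub_nonneg.2 h1)]

theorem charpoly_positive_at_rho_general (γ ε X : ℝ) (hγ : 0 < γ) (hγ1 : γ < 1)
    (hε : 0 < ε) (hε0 : ε < 2 * (1 - γ) / (4 + 5 * γ - 6 * γ ^ 2))
    (hX : X ≤ (1 - γ) / 3) :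
    let α : ℝ := 1 - ε
    let β : ℝ := 1 - ε ^ 2
    let f : ℝ → ℝ := fun x =>
      (x - α) * ((x - (α + (1 - α) * γ)) * (x - β) - X * (1 - α) * (1 - β))
        - γ * X * (1 - α) * (1 - β) * (x + 1 - 2 * β)
    0 < f (1 - ε ^ 2 / 2) := by
  intro α β f
  have hlt := one_sub_lt_four_add_five_mul_sub_six_mul_sq hγ.le hγ1.le
  have hεD : ε * (4 + 5 * γ - 6 * γ ^ 2) < 2 * (1 - γ) :=
    (lt_div_iff₀ (by linarith)).1 hε0
  have hε2 : ε < 2 := by nlinarith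
  have hcoef : 0 ≤ 2 + ε * (3 * γ - 1) := by nlinarith
  change 0 < charpoly γ X (1 - ε) (1 - ε ^ 2) (1 - ε ^ 2 / 2)
  rw [charpoly_eval_one_sub_sq_half]
  exact mul_pos (pow_pos hε 4) (quadratic_factor_pos hcoef hεD hX)

/-- Key spectral-radius estimate: positivity of the characteristic polynomial
at `1 - ε²/2`. -/
theorem charpoly_positive_at_rho (γ ε X : ℝ) (hγ : 0 < γ) (hγ1 : γ < 1)
    (hε : 0 < ε) (hε0 : ε < 2 * (1 - γ) / (4 + 5 * γ - 6 * γ ^ 2))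
    (hX0 : 0 ≤ X) (hX : X ≤ (1 - γ) / 3) :
    let α : ℝ := 1 - ε
    let β : ℝ := 1 - ε ^ 2
    let f : ℝ → ℝ := fun x =>
      (x - α) * ((x - (α + (1 - α) * γ)) * (x - β) - X * (1 - α) * (1 - β))
        - γ * X * (1 - α) * (1 - β) * (x + 1 - 2 * β)
    0 < f (1 - ε ^ 2 / 2) :=
  charpoly_positive_at_rho_general γ ε X hγ hγ1 hε hε0 hX
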